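/- If G is a graph with exactly k triangles, then the exchange number of G with respect to Δ-convexity is at most k + 2. -/

import Mathlib

variable {V : Type*}

/-- `S` is Δ-convex: no vertex outside `S` is adjacent to two adjacent vertices of `S`. -/
def DeltaConvex (G : SimpleGraph V) (S : Set V) : Prop :=
  ∀ ⦃w u v : V⦄, u ∈ S → v ∈ S → G.Adj u v → G.Adj w u → G.Adj w v → w ∈ S

/-- The Δ-convex hull of `S`: the smallest Δ-convex set containing `S`. -/
def deltaHull (G : SimpleGraph V) (S : Set V) : Set V :=
  ⋂₀ {T : Set V | S ⊆ T ∧ DeltaConvex G T}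

/-- `S` is exchange independent for Δ-convexity. -/
def EIndep [DecidableEq V] (G : SimpleGraph V) (S : Finset V) : Prop :=
  S.card = 1 ∨ ∃ p ∈ S, ∃ q ∈ deltaHull G ↑(S.erase p),
    ∀ a ∈ S.erase p, q ∉ deltaHull G ↑(S.erase a)

/-- The exchange number of `G` for Δ-convexity. -/
noncomputable def deltaExchangeNumber [DecidableEq V] [Fintype V]
    (G : SimpleGraph V) : ℕ :=
  sSup {n : ℕ | ∃ S : Finset V, EIndep G S ∧ S.card = n}

/-!
Let `T` be a set with `q ∈ ⟨T⟩` but `q ∉ ⟨T ∖ {a}⟩` for every `a ∈ T`; it suffices to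
show `|T| ≤ k + 1`, since an exchange independent `S` yields such a `T = S ∖ {p}`.

Run a union–find on `T` while growing a set `X ⊇ T` one vertex at a time: every vertex of `X`
lies in the hull of one block, and a new vertex `w`, added through a triangle `{u, v, w}` with
`u, v ∈ X`, merges the blocks of `u` and `v`. Each merge costs a triangle that is contained in the
new `X` but not in the old one, so `|T| ≤ #blocks + #triangles`. Once `X` is Δ-convex it contains
`q`, which lies in the hull of a single block; minimality of `T` forces this block to be all of
`T`, so there is just one block.
-/

namespace DeltaConvex

section Hull

variable {G : SimpleGraph V} {S T : Set V}

lemma subset_deltaHull : S ⊆ deltaHull G S := fun _ hx _ hU => hU.1 hx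

lemma deltaHull_subset (hST : S ⊆ T) (hT : DeltaConvex G T) : deltaHull G S ⊆ T :=
  Set.sInter_subset_of_mem ⟨hST, hT⟩

lemma deltaHull_mono (h : S ⊆ T) : deltaHull G S ⊆ deltaHull G T :=
  fun _ hx U hU => hx U ⟨h.trans hU.1, hU.2⟩

lemma deltaConvex_deltaHull : DeltaConvex G (deltaHull G S) :=
  fun _ _ _ hu hv huv hwu hwv U hU => hU.2 (hu U hU) (hv U hU) huv hwu hwv

end Hull

section BlockCover

variable [Fintype V] [DecidableEq V] (G : SimpleGraph V) [DecidableRel G.Adj]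

/-- The blocks of `T` are the fibres `T.filter (r · = b)` of the labelling `r`. -/
structure IsBlockCover (T X : Finset V) (r : V → V) : Prop where
  subset : T ⊆ X
  mem_deltaHull_block : ∀ x ∈ X, ∃ b, x ∈ deltaHull G ↑(T.filter (r · = b))
  card_le : T.card ≤ (T.image r).card + ((G.cliqueFinset 3).filter (· ⊆ X)).card

variable {G}

lemma isBlockCover_self (T : Finset V) : IsBlockCover G T T id where
  subset := subset_rfl
  mem_deltaHull_block x hx := ⟨x, subset_deltaHull (by simpa using hx)⟩
  card_le := by simp

lemma card_le_card_filter_insert {X : Finset V} {u v w : V} (hw : w ∉ X) (hu : u ∈ X)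
    (hv : v ∈ X) (huv : G.Adj u v) (hwu : G.Adj w u) (hwv : G.Adj w v) :
    ((G.cliqueFinset 3).filter (· ⊆ X)).card + 1 ≤
      ((G.cliqueFinset 3).filter (· ⊆ insert w X)).card := by
  have htri : {w, u, v} ∈ (G.cliqueFinset 3).filter (· ⊆ insert w X) := by
    rw [Finset.mem_filter, SimpleGraph.mem_cliqueFinset_iff,
      SimpleGraph.is3Clique_triple_iff]
    refine ⟨⟨hwu, hwv, huv⟩, ?_⟩
    simp [Finset.insert_subset_iff, hu, hv]
  have hnew : {w, u, v} ∉ (G.cliqueFinset 3).filter (· ⊆ X) := by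
    simp [Finset.insert_subset_iff, hw]
  rw [← Finset.card_insert_of_notMem hnew]
  refine Finset.card_le_card (Finset.insert_subset htri fun t ht => ?_)
  rw [Finset.mem_filter] at ht ⊢
  exact ⟨ht.1, ht.2.trans (Finset.subset_insert w X)⟩

lemma IsBlockCover.exists_insert {T X : Finset V} {r : V → V} (h : IsBlockCover G T X r)
    {u v w : V} (hw : w ∉ X) (hu : u ∈ X) (hv : v ∈ X) (huv : G.Adj u v) (hwu : G.Adj w u)
    (hwv : G.Adj w v) : ∃ r', IsBlockCover G T (insert w X) r' := by
  obtain ⟨b₁, hb₁⟩ := h.mem_deltaHull_block u hu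
  obtain ⟨b₂, hb₂⟩ := h.mem_deltaHull_block v hv
  let f : V → V := fun b => if b = b₁ then b₂ else b
  have hblock : ∀ b,
      deltaHull G ↑(T.filter (r · = b)) ⊆ deltaHull G ↑(T.filter fun x => f (r x) = f b) :=
    fun b => deltaHull_mono (by intro x; simp +contextual)
  refine ⟨f ∘ r, h.subset.trans (Finset.subset_insert w X), ?_, ?_⟩
  · intro x hx
    rcases Finset.mem_insert.1 hx with rfl | hx
    · refine ⟨b₂, deltaConvex_deltaHull ?_ ?_ huv hwu hwv⟩
      · simpa [f] using hblock b₁ hb₁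
      · simpa [f] using hblock b₂ hb₂
    · obtain ⟨b, hb⟩ := h.mem_deltaHull_block x hx
      exact ⟨f b, hblock b hb⟩
  · have hmerge : (T.image r).card ≤ (T.image (f ∘ r)).card + 1 := by
      calc (T.image r).card
          ≤ (insert b₁ ((T.image r).image f)).card := by
            refine Finset.card_le_card fun b hb => ?_
            by_cases hb₁ : b = b₁
            · simp [hb₁]
            · exact Finset.mem_insert_of_mem (Finset.mem_image.2 ⟨b, hb, by simp [f, hb₁]⟩)
        _ ≤ (T.image (f ∘ r)).card + 1 := by
            rw [Finset.image_image]
            exact Finset.card_insert_le _ _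
    have := card_le_card_filter_insert hw hu hv huv hwu hwv
    have := h.card_le
    omega

lemma exists_isBlockCover_deltaConvex (T : Finset V) :
    ∃ X r, IsBlockCover G T X r ∧ DeltaConvex G ↑X := by
  obtain ⟨X, ⟨r, hr⟩, hmax⟩ :=
    Set.exists_max_image {X : Finset V | ∃ r, IsBlockCover G T X r} Finset.card
      (Set.toFinite _) ⟨T, id, isBlockCover_self T⟩
  refine ⟨X, r, hr, fun w u v hu hv huv hwu hwv => ?_⟩
  by_contra hw
  have hgrow := hmax _ (hr.exists_insert hw hu hv huv hwu hwv)
  rw [Finset.card_insert_of_notMem hw] at hgrow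
  omega

lemma card_le_of_minimal_mem_deltaHull {T : Finset V} {q : V} (hq : q ∈ deltaHull G ↑T)
    (hmin : ∀ a ∈ T, q ∉ deltaHull G ↑(T.erase a)) :
    T.card ≤ (G.cliqueFinset 3).card + 1 := by
  obtain ⟨X, r, hcover, hconv⟩ := exists_isBlockCover_deltaConvex (G := G) T
  obtain ⟨b, hb⟩ :=
    hcover.mem_deltaHull_block q (deltaHull_subset (by simpa using hcover.subset) hconv hq)
  have hone_block : T.image r ⊆ {b} := by
    intro c hc
    obtain ⟨a, ha, rfl⟩ := Finset.mem_image.1 hc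
    by_contra hab
    refine hmin a ha (deltaHull_mono (Finset.coe_subset.2 fun x hx => ?_) hb)
    rw [Finset.mem_filter] at hx
    exact Finset.mem_erase.2 ⟨by rintro rfl; exact hab (by simp [hx.2]), hx.1⟩
  have hblocks : (T.image r).card ≤ 1 := by simpa using Finset.card_le_card hone_block
  have htri := Finset.card_le_card (Finset.filter_subset (· ⊆ X) (G.cliqueFinset 3))
  have := hcover.card_le
  omega

end BlockCover

end DeltaConvex

open DeltaConvex in
theorem stmt_17 [Fintype V] [DecidableEq V] (G : SimpleGraph V)
    [DecidableRel G.Adj] (k : ℕ) (hk : (G.cliqueFinset 3).card = k) :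
    deltaExchangeNumber G ≤ k + 2 := by
  refine csSup_le' ?_
  rintro n ⟨S, hS | ⟨p, hp, q, hq, hmin⟩, rfl⟩
  · omega
  have hT := card_le_of_minimal_mem_deltaHull hq fun a ha hqa =>
    hmin a ha <| deltaHull_mono
      (Finset.coe_subset.2 (Finset.erase_subset_erase a (S.erase_subset p))) hqa
  rw [Finset.card_erase_of_mem hp, hk] at hT
  omega
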